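/- arXiv:2009.09821 — 3 statements merged into one kernel-verified Lean document; each statement's English description precedes it below -/
import Mathlib

section
/- Let q = 2^m with m ≥ 2. The number of triples (a,b,c) ∈ (F_q^*)^3 such that the quadratic a + bx + cx^2 is irreducible over F_q equals (q-1)^3 - (q-1)^2(q-2)/2 = (q/2)(q-1)^2. -/
/-!
In characteristic 2 the map `x ↦ c x² + b x` is additive, and for `b, c ≠ 0` its kernel is
`{0, b / c}`, so its image is a subgroup of index 2. Since `-a = a`, the quadratic
`a + b x + c x²` has a root exactly when `a` lies in this image, and a quadratic is irreducible
exactly when it has no root. Hence each of the `(q - 1)²` pairs `(b, c)` leaves `q / 2` values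
of `a`, all of them nonzero.
-/

open Polynomial

lemma Polynomial.irreducible_iff_forall_not_isRoot_of_natDegree_eq_two {K : Type*} [Field K]
    {p : K[X]} (hp : p.natDegree = 2) : Irreducible p ↔ ∀ x, ¬ p.IsRoot x := by
  have hp0 : p ≠ 0 := by rintro rfl; simp at hp
  rw [irreducible_iff_roots_eq_zero_of_degree_le_three (by omega) (by omega),
    Multiset.eq_zero_iff_forall_notMem]
  simp only [mem_roots hp0]

lemma Set.ncard_setOf_fiberwise_const {α β : Type*} [Finite α] [Finite β] {s : Set β}
    {t : β → Set α} {n : ℕ} (ht : ∀ b ∈ s, (t b).ncard = n) :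
    {p : α × β | p.2 ∈ s ∧ p.1 ∈ t p.2}.ncard = s.ncard * n := by
  classical
  have := Fintype.ofFinite α
  have := Fintype.ofFinite β
  simp only [Set.ncard_eq_toFinset_card', Set.toFinset_ofPred, Finset.card_filter,
    Fintype.sum_prod_type_right]
  have hfiber : ∀ b, (∑ a, if b ∈ s ∧ a ∈ t b then 1 else 0) = if b ∈ s then n else 0 := by
    intro b
    split_ifs with hb
    · rw [← ht b hb, Set.ncard_eq_toFinset_card', ← Set.filter_mem_univ_eq_toFinset,
        Finset.card_filter]
      simp only [hb, true_and]
    · simp [hb]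
  simp only [hfiber]
  rw [← Finset.sum_filter, Finset.sum_const, smul_eq_mul, Set.filter_mem_univ_eq_toFinset]

section CharTwo

variable {F : Type*} [Field F] [CharP F 2]

@[simps]
def quadraticAddHom (b c : F) : F →+ F where
  toFun x := c * x ^ 2 + b * x
  map_zero' := by simp
  map_add' x y := by rw [CharTwo.add_sq]; ring

lemma quadraticAddHom_eq_zero_iff {b c x : F} (hc : c ≠ 0) :
    quadraticAddHom b c x = 0 ↔ x = 0 ∨ x = b / c := by
  rw [quadraticAddHom_apply, show c * x ^ 2 + b * x = x * (c * x + b) by ring, mul_eq_zero,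
    CharTwo.add_eq_zero, eq_div_iff hc, mul_comm]

lemma card_ker_quadraticAddHom {b c : F} (hb : b ≠ 0) (hc : c ≠ 0) :
    Nat.card (quadraticAddHom b c).ker = 2 := by
  have hker : ((quadraticAddHom b c).ker : Set F) = {0, b / c} := by
    ext x
    simp only [SetLike.mem_coe, AddMonoidHom.mem_ker, quadraticAddHom_eq_zero_iff hc,
      Set.mem_insert_iff, Set.mem_singleton_iff]
  rw [← SetLike.coe_sort_coe, hker, Nat.card_coe_set_eq, Set.ncard_pair (div_ne_zero hb hc).symm]

lemma two_mul_ncard_range_quadraticAddHom [Finite F] {b c : F} (hb : b ≠ 0) (hc : c ≠ 0) :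
    2 * (Set.range (quadraticAddHom b c)).ncard = Nat.card F := by
  rw [← card_ker_quadraticAddHom hb hc, ← AddMonoidHom.coe_range, ← Nat.card_coe_set_eq,
    SetLike.coe_sort_coe, ← AddSubgroup.index_ker, AddSubgroup.card_mul_index]

lemma irreducible_quadratic_iff {a b c : F} (hc : c ≠ 0) :
    Irreducible (C a + C b * X + C c * X ^ 2) ↔ a ∉ Set.range (quadraticAddHom b c) := by
  have hdeg : (C a + C b * X + C c * X ^ 2).natDegree = 2 := by
    rw [show C a + C b * X + C c * X ^ 2 = C c * X ^ 2 + C b * X + C a by ring]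
    exact natDegree_quadratic hc
  rw [irreducible_iff_forall_not_isRoot_of_natDegree_eq_two hdeg, Set.mem_range, not_exists]
  refine forall_congr' fun x => not_congr ?_
  simp only [IsRoot.def, eval_add, eval_mul, eval_C, eval_X, eval_pow, quadraticAddHom_apply]
  rw [add_assoc, add_comm, CharTwo.add_eq_zero, add_comm (b * x)]

end CharTwo

theorem stmt10_general (F : Type*) [Field F] [Fintype F]
    (m : ℕ) (hq : Fintype.card F = 2 ^ m) :
    {t : F × F × F | t.1 ≠ 0 ∧ t.2.1 ≠ 0 ∧ t.2.2 ≠ 0 ∧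
        Irreducible (Polynomial.C t.1 + Polynomial.C t.2.1 * Polynomial.X +
          Polynomial.C t.2.2 * Polynomial.X ^ 2 : Polynomial F)}.ncard
      = (Fintype.card F / 2) * (Fintype.card F - 1) ^ 2 := by
  have : CharP F 2 := charP_of_card_eq_prime_pow hq
  have hset : {t : F × F × F | t.1 ≠ 0 ∧ t.2.1 ≠ 0 ∧ t.2.2 ≠ 0 ∧
        Irreducible (C t.1 + C t.2.1 * X + C t.2.2 * X ^ 2)} =
      {t | t.2 ∈ ({0}ᶜ ×ˢ {0}ᶜ : Set (F × F)) ∧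
        t.1 ∈ (Set.range (quadraticAddHom t.2.1 t.2.2))ᶜ} := by
    ext ⟨a, b, c⟩
    refine ⟨fun ⟨_, hb, hc, hirr⟩ => ⟨⟨hb, hc⟩, (irreducible_quadratic_iff hc).1 hirr⟩,
      fun ⟨⟨hb, hc⟩, ha⟩ => ⟨?_, hb, hc, (irreducible_quadratic_iff hc).2 ha⟩⟩
    rintro rfl
    exact ha ⟨0, map_zero _⟩
  rw [hset, Set.ncard_setOf_fiberwise_const
      (t := fun y : F × F => (Set.range (quadraticAddHom y.1 y.2))ᶜ) (n := Fintype.card F / 2),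
    mul_comm, Set.ncard_prod, Set.ncard_compl, Set.ncard_singleton, Nat.card_eq_fintype_card, sq]
  rintro ⟨b, c⟩ ⟨hb, hc⟩
  have hrange := two_mul_ncard_range_quadraticAddHom hb hc
  rw [Nat.card_eq_fintype_card] at hrange
  rw [Set.ncard_compl, Nat.card_eq_fintype_card]
  omega

theorem stmt10 (F : Type*) [Field F] [Fintype F]
    (m : ℕ) (hm : 2 ≤ m) (hq : Fintype.card F = 2 ^ m) :
    {t : F × F × F | t.1 ≠ 0 ∧ t.2.1 ≠ 0 ∧ t.2.2 ≠ 0 ∧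
        Irreducible (Polynomial.C t.1 + Polynomial.C t.2.1 * Polynomial.X +
          Polynomial.C t.2.2 * Polynomial.X ^ 2 : Polynomial F)}.ncard
      = (Fintype.card F / 2) * (Fintype.card F - 1) ^ 2 :=
  stmt10_general F m hq
end

section
/- Let q be a prime power and 0 ≤ k, l ≤ q-2. Let P be the rectangle [0,k] × [0,l] in Z^2. The minimum distance of the toric code C_P(F_q) equals (q-1-k)(q-1-l). -/
/-!
A nonzero polynomial of degree at most `d` in one variable has at most `d` roots, so it is nonzero
at at least `q - 1 - d` points of `Fˣ`. For `f = ∑ c i j xⁱ yʲ ≠ 0`, choose `i₀` with a nonzero row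
`c i₀ ·`; for each of the at least `q - 1 - l` nonzero `y` where `∑ⱼ c i₀ j yʲ ≠ 0`, the polynomial
`f(·, y)` is nonzero of degree at most `k`, which gives `(q - 1 - k) (q - 1 - l)` nonzeros of `f`.
Equality holds for `f = A(x) B(y)`, with `A`, `B` products of distinct linear factors `X - a`,
`a ≠ 0`.
-/

open Polynomial Finset

namespace Polynomial

variable {R : Type*} [CommRing R]

noncomputable def ofFinCoeffs {n : ℕ} (a : Fin n → R) : R[X] := ∑ i, C (a i) * X ^ (i : ℕ)

lemma coeff_ofFinCoeffs {n : ℕ} (a : Fin n → R) (i : Fin n) :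
    (ofFinCoeffs a).coeff i = a i := by
  simp only [ofFinCoeffs, finsetSum_coeff, coeff_C_mul_X_pow]
  rw [Finset.sum_eq_single i (fun j _ hj => if_neg (Fin.val_injective.ne hj).symm) (by simp)]
  simp

lemma eval_ofFinCoeffs {n : ℕ} (a : Fin n → R) (x : R) :
    (ofFinCoeffs a).eval x = ∑ i, a i * x ^ (i : ℕ) := by
  simp [ofFinCoeffs, eval_finsetSum]

lemma natDegree_ofFinCoeffs_le {n : ℕ} (a : Fin (n + 1) → R) : (ofFinCoeffs a).natDegree ≤ n :=
  natDegree_sum_le_of_forall_le _ _ fun i _ =>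
    (natDegree_C_mul_X_pow_le _ _).trans (Nat.lt_succ_iff.mp i.isLt)

lemma ofFinCoeffs_ne_zero {n : ℕ} {a : Fin n → R} (ha : a ≠ 0) : ofFinCoeffs a ≠ 0 := by
  obtain ⟨i, hi⟩ := Function.ne_iff.mp ha
  exact fun h => hi (by rw [← coeff_ofFinCoeffs a i, h, coeff_zero]; rfl)

lemma card_sub_one_sub_natDegree_le_card_nonzero_nonroots [IsDomain R] [Fintype R]
    [DecidableEq R] {p : R[X]} (hp : p ≠ 0) :
    Fintype.card R - 1 - p.natDegree ≤ #{x | x ≠ 0 ∧ p.eval x ≠ 0} := by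
  have hroots : #{x | p.eval x = 0} ≤ p.natDegree :=
    card_le_degree_of_subset_roots fun x hx => by simpa [mem_roots hp] using hx
  have hcover :
      #({x | x ≠ 0} : Finset R) ≤ #{x | x ≠ 0 ∧ p.eval x ≠ 0} + #{x | p.eval x = 0} :=
    (card_le_card fun x => by simp only [mem_filter, mem_union, mem_univ, true_and]; tauto).trans
      (card_union_le _ _)
  rw [filter_ne' univ 0, card_erase_of_mem (mem_univ 0), card_univ] at hcover
  omega

end Polynomial

lemma Finset.card_mul_le_card_filter_prod {α β : Type*} [Fintype α] [Fintype β]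
    {P : α → β → Prop} [∀ x y, Decidable (P x y)] {s : Finset β} {n : ℕ}
    (h : ∀ y ∈ s, n ≤ #{x | P x y}) : #s * n ≤ #{p : α × β | P p.1 p.2} := by
  rw [card_filter, Fintype.sum_prod_type, sum_comm, ← smul_eq_mul]
  refine (card_nsmul_le_sum s _ n fun y hy => ?_).trans (sum_le_sum_of_subset (subset_univ s))
  simpa only [card_filter] using h y hy

lemma sum_mul_pow_mul_pow_eq_sum_sum {R : Type*} [CommSemiring R] {m n : ℕ}
    (c : Fin m × Fin n → R) (x y : R) :
    ∑ ij, c ij * x ^ (ij.1 : ℕ) * y ^ (ij.2 : ℕ) =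
      ∑ i, (∑ j, c (i, j) * y ^ (j : ℕ)) * x ^ (i : ℕ) := by
  simp only [Fintype.sum_prod_type, sum_mul]
  exact sum_congr rfl fun i _ => sum_congr rfl fun j _ => by ring

section

variable {F : Type*} [Field F] [Fintype F] [DecidableEq F]

lemma card_sub_one_sub_le_card_nonzero_nonroots {d : ℕ} {a : Fin (d + 1) → F} (ha : a ≠ 0) :
    Fintype.card F - 1 - d ≤ #{x | x ≠ 0 ∧ ∑ i, a i * x ^ (i : ℕ) ≠ 0} := by
  simpa only [eval_ofFinCoeffs] using
    (Nat.sub_le_sub_left (natDegree_ofFinCoeffs_le a) _).trans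
      (card_sub_one_sub_natDegree_le_card_nonzero_nonroots (ofFinCoeffs_ne_zero ha))

lemma exists_card_nonzero_nonroots_eq (d : ℕ) :
    ∃ a : Fin (d + 1) → F, a ≠ 0 ∧
      #{x | x ≠ 0 ∧ ∑ i, a i * x ^ (i : ℕ) ≠ 0} = Fintype.card F - 1 - d := by
  -- `min` also covers `d ≥ q - 1`, where the truncated count `q - 1 - d` is `0`.
  obtain ⟨t, ht, htcard⟩ := exists_subset_card_eq (s := univ.erase (0 : F))
    (n := min d (Fintype.card F - 1)) (by simp [card_erase_of_mem])
  set A : F[X] := ∏ a ∈ t, (X - C a)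
  have hA : A.Monic := monic_prod_of_monic _ _ fun a _ => monic_X_sub_C a
  have hAdeg : A.natDegree = #t := by
    rw [natDegree_prod_of_monic _ _ fun a _ => monic_X_sub_C a]
    simp
  have hAeval (x : F) : ∑ i : Fin (d + 1), A.coeff i * x ^ (i : ℕ) = A.eval x := by
    rw [eval_eq_sum_range' (n := d + 1) (by omega),
      Fin.sum_univ_eq_sum_range (fun i => A.coeff i * x ^ i)]
  have hAroots (x : F) : A.eval x = 0 ↔ x ∈ t := by
    simp [A, eval_prod, prod_eq_zero_iff, sub_eq_zero]
  refine ⟨fun i => A.coeff i, fun h => ?_, ?_⟩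
  · have := congrFun h ⟨A.natDegree, by omega⟩
    simp [hA.coeff_natDegree] at this
  · have : ({x | x ≠ 0 ∧ ∑ i : Fin (d + 1), A.coeff i * x ^ (i : ℕ) ≠ 0} : Finset F) =
        univ.erase 0 \ t := by
      ext x
      simp [hAeval, hAroots]
    rw [this, card_sdiff_of_subset ht, card_erase_of_mem (mem_univ 0), card_univ]
    omega

lemma card_sub_mul_card_sub_le_card_nonzero_nonroots {k l : ℕ}
    {c : Fin (k + 1) × Fin (l + 1) → F} (hc : c ≠ 0) :
    (Fintype.card F - 1 - k) * (Fintype.card F - 1 - l) ≤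
      #{p : F × F | p.1 ≠ 0 ∧ p.2 ≠ 0 ∧ ∑ ij, c ij * p.1 ^ (ij.1 : ℕ) * p.2 ^ (ij.2 : ℕ) ≠ 0} := by
  obtain ⟨⟨i₀, j₀⟩, hij⟩ := Function.ne_iff.mp hc
  have hrow : (fun j => c (i₀, j)) ≠ 0 := Function.ne_iff.mpr ⟨j₀, hij⟩
  have hfiber : ∀ y ∈ ({y | y ≠ 0 ∧ ∑ j, c (i₀, j) * y ^ (j : ℕ) ≠ 0} : Finset F),
      Fintype.card F - 1 - k ≤
        #{x | x ≠ 0 ∧ y ≠ 0 ∧ ∑ ij, c ij * x ^ (ij.1 : ℕ) * y ^ (ij.2 : ℕ) ≠ 0} := by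
    intro y hy
    simp only [mem_filter, mem_univ, true_and] at hy
    have hcol : (fun i => ∑ j, c (i, j) * y ^ (j : ℕ)) ≠ 0 := Function.ne_iff.mpr ⟨i₀, hy.2⟩
    simpa only [sum_mul_pow_mul_pow_eq_sum_sum, hy.1, ne_eq, not_false_eq_true, true_and]
      using card_sub_one_sub_le_card_nonzero_nonroots hcol
  calc (Fintype.card F - 1 - k) * (Fintype.card F - 1 - l)
      ≤ #{y | y ≠ 0 ∧ ∑ j, c (i₀, j) * y ^ (j : ℕ) ≠ 0} * (Fintype.card F - 1 - k) := by
        rw [mul_comm]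
        exact Nat.mul_le_mul_right _ (card_sub_one_sub_le_card_nonzero_nonroots hrow)
    _ ≤ _ := card_mul_le_card_filter_prod hfiber

lemma exists_card_nonzero_nonroots_eq_sub_mul_sub (k l : ℕ) :
    ∃ c : Fin (k + 1) × Fin (l + 1) → F, c ≠ 0 ∧
      #{p : F × F | p.1 ≠ 0 ∧ p.2 ≠ 0 ∧ ∑ ij, c ij * p.1 ^ (ij.1 : ℕ) * p.2 ^ (ij.2 : ℕ) ≠ 0} =
        (Fintype.card F - 1 - k) * (Fintype.card F - 1 - l) := by
  obtain ⟨a, ha, hacard⟩ := exists_card_nonzero_nonroots_eq (F := F) k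
  obtain ⟨b, hb, hbcard⟩ := exists_card_nonzero_nonroots_eq (F := F) l
  obtain ⟨i, hi⟩ := Function.ne_iff.mp ha
  obtain ⟨j, hj⟩ := Function.ne_iff.mp hb
  refine ⟨fun ij => a ij.1 * b ij.2, Function.ne_iff.mpr ⟨(i, j), mul_ne_zero hi hj⟩, ?_⟩
  have hprod (x y : F) :
      ∑ ij : Fin (k + 1) × Fin (l + 1), a ij.1 * b ij.2 * x ^ (ij.1 : ℕ) * y ^ (ij.2 : ℕ) =
        (∑ i, a i * x ^ (i : ℕ)) * ∑ j, b j * y ^ (j : ℕ) := by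
    rw [Fintype.sum_prod_type, sum_mul_sum]
    exact sum_congr rfl fun i _ => sum_congr rfl fun j _ => by ring
  rw [← hacard, ← hbcard, ← card_product, ← filter_product]
  congr 1
  apply filter_congr
  intro p _
  rw [hprod, mul_ne_zero_iff]
  tauto

end

theorem stmt16_general (F : Type*) [Field F] [Fintype F]
    (k l : ℕ) :
    IsLeast {w : ℕ | ∃ c : Fin (k + 1) × Fin (l + 1) → F, c ≠ 0 ∧
        {p : F × F | p.1 ≠ 0 ∧ p.2 ≠ 0 ∧
          (∑ ij : Fin (k + 1) × Fin (l + 1),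
            c ij * p.1 ^ (ij.1 : ℕ) * p.2 ^ (ij.2 : ℕ)) ≠ 0}.ncard = w}
      ((Fintype.card F - 1 - k) * (Fintype.card F - 1 - l)) := by
  classical
  simp only [Set.ncard_eq_toFinset_card', Set.toFinset_ofPred]
  refine ⟨exists_card_nonzero_nonroots_eq_sub_mul_sub k l, ?_⟩
  rintro w ⟨c, hc, rfl⟩
  exact card_sub_mul_card_sub_le_card_nonzero_nonroots hc

theorem stmt16 (F : Type*) [Field F] [Fintype F]
    (k l : ℕ) (hk : k ≤ Fintype.card F - 2) (hl : l ≤ Fintype.card F - 2) :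
    IsLeast {w : ℕ | ∃ c : Fin (k + 1) × Fin (l + 1) → F, c ≠ 0 ∧
        {p : F × F | p.1 ≠ 0 ∧ p.2 ≠ 0 ∧
          (∑ ij : Fin (k + 1) × Fin (l + 1),
            c ij * p.1 ^ (ij.1 : ℕ) * p.2 ^ (ij.2 : ℕ)) ≠ 0}.ncard = w}
      ((Fintype.card F - 1 - k) * (Fintype.card F - 1 - l)) :=
  stmt16_general F k l
end

section
/- Let q be a prime power and n ≥ 1. If two convex lattice polytopes P_1, P_2 ⊂ [0, q-2]^m are related by a unimodular affine transformation T(x) = Mx + λ with M ∈ GL(m, Z), det M = ±1, λ ∈ Z^m, and T(P_1) = P_2, then the toric codes C_{P_1}(F_q) and C_{P_2}(F_q) have equal weight enumerators; in particular they have the same dimension and the same minimum distance. -/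
/-!
Write `χ_s(a) = ∏ aᵢ ^ sᵢ` for the monomial with exponent vector `s` on the torus `(Fˣ)ᵐ`.
Since `χ_{Mp + λ}(a) = χ_λ(a) · χ_p(a^M)`, where `(a^M)ⱼ = ∏ aᵢ ^ Mᵢⱼ`, the linear map
`w ↦ (a ↦ χ_λ(a) · w(a^M))` sends the evaluation vector of `χ_p` to that of `χ_{Mp+λ}`.
For `det M = ±1` the substitution `a ↦ a^M` is a bijection of the torus, with inverse `a ↦ a^{M⁻¹}`,
and `χ_λ` takes unit values, so this map is a weight-preserving linear automorphism carrying
`C_{P₁}` onto `C_{P₂}`.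
-/

theorem Finset.zpow_sum {G ι : Type*} [CommGroup G] (a : G) (s : Finset ι) (f : ι → ℤ) :
    a ^ (∑ i ∈ s, f i) = ∏ i ∈ s, a ^ f i := by
  classical
  induction s using Finset.induction with
  | empty => simp
  | insert _ _ h ih => simp [Finset.sum_insert h, Finset.prod_insert h, zpow_add, ih]

namespace Torus

variable {G ι : Type*} [CommGroup G] [Fintype ι]

def monomial (s : ι → ℤ) (a : ι → G) : G :=
  ∏ i, a i ^ s i

theorem monomial_add (s t : ι → ℤ) (a : ι → G) :
    monomial (s + t) a = monomial s a * monomial t a := by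
  simp only [monomial, Pi.add_apply, zpow_add, Finset.prod_mul_distrib]

def subst (M : Matrix ι ι ℤ) (a : ι → G) : ι → G :=
  fun j => monomial (fun i => M i j) a

theorem monomial_mulVec (M : Matrix ι ι ℤ) (p : ι → ℤ) (a : ι → G) :
    monomial (M.mulVec p) a = monomial p (subst M a) :=
  calc ∏ i, a i ^ (M.mulVec p) i
      = ∏ i, ∏ j, (a i ^ M i j) ^ p j := by
        refine Finset.prod_congr rfl fun i _ => ?_
        rw [Matrix.mulVec, dotProduct, Finset.zpow_sum]
        exact Finset.prod_congr rfl fun j _ => zpow_mul _ _ _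
    _ = ∏ j, ∏ i, (a i ^ M i j) ^ p j := Finset.prod_comm
    _ = ∏ j, subst M a j ^ p j :=
        Finset.prod_congr rfl fun j _ => Finset.prod_zpow _ _ _

theorem subst_subst (M N : Matrix ι ι ℤ) (a : ι → G) :
    subst N (subst M a) = subst (M * N) a := by
  funext j
  rw [subst, ← monomial_mulVec]
  congr 1

theorem subst_one [DecidableEq ι] (a : ι → G) : subst (1 : Matrix ι ι ℤ) a = a := by
  funext j
  simp [subst, monomial, Matrix.one_apply]

def substEquiv [DecidableEq ι] (M : Matrix ι ι ℤ) [Invertible M] : (ι → G) ≃ (ι → G) where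
  toFun := subst M
  invFun := subst ⅟M
  left_inv a := by
    rw [subst_subst, mul_invOf_self, subst_one]
  right_inv a := by
    rw [subst_subst, invOf_mul_self, subst_one]

@[simp]
theorem substEquiv_apply [DecidableEq ι] (M : Matrix ι ι ℤ) [Invertible M] (a : ι → G) :
    substEquiv M a = subst M a :=
  rfl

end Torus

section MonomialEquiv

variable {K X : Type*} [CommSemiring K]

def monomialEquiv (σ : X ≃ X) (u : X → Kˣ) : (X → K) ≃ₗ[K] (X → K) :=
  (LinearEquiv.funCongrLeft K K σ).trans
    (LinearEquiv.piCongrRight fun a => LinearEquiv.smulOfUnit (u a))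

@[simp]
theorem monomialEquiv_apply (σ : X ≃ X) (u : X → Kˣ) (w : X → K) (a : X) :
    monomialEquiv σ u w a = u a * w (σ a) :=
  rfl

theorem ncard_support_monomialEquiv (σ : X ≃ X) (u : X → Kˣ) (w : X → K) :
    (Function.support (monomialEquiv σ u w)).ncard = (Function.support w).ncard := by
  have hsupp : Function.support (monomialEquiv σ u w) = σ.symm '' Function.support w := by
    ext a
    simp [Equiv.image_symm_eq_preimage, Units.mul_right_eq_zero]
  rw [hsupp, Set.ncard_image_of_injective _ σ.symm.injective]

end MonomialEquiv

section WeightPreserving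

variable {K V : Type*} [Semiring K] [AddCommMonoid V] [Module K V]
  {wt : V → ℕ} {E : V ≃ₗ[K] V} {C₁ C₂ : Submodule K V}

theorem setOf_mem_and_weight_eq_of_map_eq (hwt : ∀ w, wt (E w) = wt w)
    (hC : C₁.map (E : V →ₗ[K] V) = C₂) (n : ℕ) :
    {w | w ∈ C₂ ∧ wt w = n} = E '' {w | w ∈ C₁ ∧ wt w = n} := by
  ext w
  rw [E.image_eq_preimage_symm, ← hC, Set.mem_preimage, Set.mem_ofPred_eq, Set.mem_ofPred_eq,
    Submodule.mem_map_equiv, ← hwt (E.symm w), E.apply_symm_apply]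

theorem ncard_setOf_mem_and_weight_eq_of_map_eq (hwt : ∀ w, wt (E w) = wt w)
    (hC : C₁.map (E : V →ₗ[K] V) = C₂) (n : ℕ) :
    {w | w ∈ C₁ ∧ wt w = n}.ncard = {w | w ∈ C₂ ∧ wt w = n}.ncard := by
  rw [setOf_mem_and_weight_eq_of_map_eq hwt hC, Set.ncard_image_of_injective _ E.injective]

theorem setOf_nonzero_weight_eq_of_map_eq (hwt : ∀ w, wt (E w) = wt w)
    (hC : C₁.map (E : V →ₗ[K] V) = C₂) :
    {n | ∃ w ∈ C₁, w ≠ 0 ∧ wt w = n} = {n | ∃ w ∈ C₂, w ≠ 0 ∧ wt w = n} := by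
  ext n
  constructor
  · rintro ⟨w, hw, hw0, rfl⟩
    exact ⟨E w, hC ▸ Submodule.mem_map_of_mem hw, E.map_ne_zero_iff.mpr hw0, hwt w⟩
  · rintro ⟨w, hw, hw0, rfl⟩
    rw [← hC, Submodule.mem_map_equiv] at hw
    exact ⟨E.symm w, hw, E.symm.map_ne_zero_iff.mpr hw0, by rw [← hwt, E.apply_symm_apply]⟩

end WeightPreserving

theorem stmt19_general (F : Type*) [Field F]
    (m : ℕ)
    (A1 A2 : Finset (Fin m → ℤ))
    (M : Matrix (Fin m) (Fin m) ℤ) (hdet : M.det = 1 ∨ M.det = -1)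
    (lam : Fin m → ℤ)
    (hT : A2 = A1.image (fun p => M.mulVec p + lam)) :
    let mono : (Fin m → ℤ) → (Fin m → Fˣ) → F :=
      fun s a => ∏ i, ((a i ^ s i : Fˣ) : F)
    let C1 := Submodule.span F (mono '' (A1 : Set (Fin m → ℤ)))
    let C2 := Submodule.span F (mono '' (A2 : Set (Fin m → ℤ)))
    let wt : ((Fin m → Fˣ) → F) → ℕ := fun w => {a : Fin m → Fˣ | w a ≠ 0}.ncard
    (∀ n : ℕ, {w | w ∈ C1 ∧ wt w = n}.ncard = {w | w ∈ C2 ∧ wt w = n}.ncard) ∧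
    Module.finrank F C1 = Module.finrank F C2 ∧
    sInf {n : ℕ | ∃ w ∈ C1, w ≠ 0 ∧ wt w = n} = sInf {n : ℕ | ∃ w ∈ C2, w ≠ 0 ∧ wt w = n} := by
  intro mono C1 C2 wt
  have : Invertible M := M.invertibleOfIsUnitDet <| by
    rcases hdet with h | h <;> simp [h]
  let E := monomialEquiv (Torus.substEquiv (G := Fˣ) M) (Torus.monomial lam)
  have hmono : ∀ s, mono s = fun a => ((Torus.monomial s a : Fˣ) : F) := fun s => by
    funext a; simp [mono, Torus.monomial, Units.coe_prod]
  have hE : ∀ p, E (mono p) = mono (M.mulVec p + lam) := fun p => by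
    funext a
    simp [E, hmono, Torus.monomial_add, Torus.monomial_mulVec, mul_comm]
  have hwt : ∀ w, wt (E w) = wt w := ncard_support_monomialEquiv _ _
  have hC : C1.map (E : _ →ₗ[F] _) = C2 := by
    change _ = Submodule.span F (mono '' (A2 : Set (Fin m → ℤ)))
    rw [Submodule.map_span, ← Set.image_comp, hT, Finset.coe_image, ← Set.image_comp]
    exact congrArg _ (Set.image_congr fun p _ => hE p)
  exact ⟨ncard_setOf_mem_and_weight_eq_of_map_eq hwt hC,
    hC ▸ (LinearEquiv.finrank_map_eq E C1).symm,
    congrArg sInf (setOf_nonzero_weight_eq_of_map_eq hwt hC)⟩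

theorem stmt19 (F : Type*) [Field F] [Fintype F]
    (m : ℕ) (hm : 1 ≤ m)
    (A1 A2 : Finset (Fin m → ℤ))
    (hb1 : ∀ p ∈ A1, ∀ i, 0 ≤ p i ∧ p i ≤ (Fintype.card F : ℤ) - 2)
    (hb2 : ∀ p ∈ A2, ∀ i, 0 ≤ p i ∧ p i ≤ (Fintype.card F : ℤ) - 2)
    (M : Matrix (Fin m) (Fin m) ℤ) (hdet : M.det = 1 ∨ M.det = -1)
    (lam : Fin m → ℤ)
    (hT : A2 = A1.image (fun p => M.mulVec p + lam)) :
    let mono : (Fin m → ℤ) → (Fin m → Fˣ) → F :=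
      fun s a => ∏ i, ((a i ^ s i : Fˣ) : F)
    let C1 := Submodule.span F (mono '' (A1 : Set (Fin m → ℤ)))
    let C2 := Submodule.span F (mono '' (A2 : Set (Fin m → ℤ)))
    let wt : ((Fin m → Fˣ) → F) → ℕ := fun w => {a : Fin m → Fˣ | w a ≠ 0}.ncard
    (∀ n : ℕ, {w | w ∈ C1 ∧ wt w = n}.ncard = {w | w ∈ C2 ∧ wt w = n}.ncard) ∧
    Module.finrank F C1 = Module.finrank F C2 ∧
    sInf {n : ℕ | ∃ w ∈ C1, w ≠ 0 ∧ wt w = n} = sInf {n : ℕ | ∃ w ∈ C2, w ≠ 0 ∧ wt w = n} :=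
  stmt19_general F m A1 A2 M hdet lam hT
end
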